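/- Suppose T = β_0 D + Σ_{k=1}^p φ_k Z_k + ε with E[ε | Z] = 0, Z_1,...,Z_p mutually independent with means ζ_j. For 2 ≤ k ≤ p let I_k(Z; ζ) denote the vector of all centered k-th order interactions ∏_{j∈S}(Z_j − ζ_j), S ⊆ {1,...,p}, |S| = k, and suppose the stacked vector E[ I_{2:q}(Z; ζ) · D ] has at least one nonzero entry for some q ≤ p. Then the affine map β ↦ E[ I_{2:q}(Z; ζ)(T − β D) ] has β_0 as its unique zero. -/

import Mathlib

open MeasureTheory ProbabilityTheory

/-! With `I_S = ∏_{j ∈ S} (Z_j − ζ_j)`, the structural equation splits `E[I_S (T − βD)]` into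
`(β₀ − β) E[I_S D] + Σ_k φ_k E[I_S Z_k] + E[I_S ε]`. The last term vanishes because `I_S` is
a function of `Z` and `E[ε | Z] = 0`. For `|S| ≥ 2` each `I_S Z_k` is a product of functions
of the independent coordinates in which some factor `Z_i − ζ_i` with `i ≠ k` occurs, so its
expectation factorizes and vanishes. Hence the moment map is `β ↦ (β₀ − β) E[I_S D]`, and the
relevance condition pins its zero at `β₀`. -/

lemma integral_mul_eq_zero_of_condExp_eq_zero {Ω : Type*} {m m₀ : MeasurableSpace Ω}
    {μ : Measure Ω} (hm : m ≤ m₀) [SigmaFinite (μ.trim hm)] {f g : Ω → ℝ}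
    (hf : StronglyMeasurable[m] f) (hfg : Integrable (f * g) μ) (hg : Integrable g μ)
    (hcond : μ[g | m] =ᵐ[μ] 0) : ∫ ω, f ω * g ω ∂μ = 0 := by
  have hpull : μ[f * g | m] =ᵐ[μ] 0 := by
    filter_upwards [condExp_mul_of_stronglyMeasurable_left hf hfg hg, hcond] with ω h₁ h₂
    simp [h₁, h₂]
  calc ∫ ω, f ω * g ω ∂μ = ∫ ω, (μ[f * g | m]) ω ∂μ := by rw [integral_condExp hm]; rfl
    _ = 0 := by simp [integral_congr_ae hpull]

section Moments

variable {Ω ι : Type*} [MeasurableSpace Ω] {μ : Measure Ω}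

lemma integral_sub_eq_zero_of_eq_integral [IsProbabilityMeasure μ] {X : Ω → ℝ}
    (hX : Integrable X μ) {c : ℝ} (hc : c = ∫ ω, X ω ∂μ) : ∫ ω, X ω - c ∂μ = 0 := by
  rw [integral_sub hX (integrable_const c), integral_const, hc]
  simp

lemma integral_interaction_mul_eq_zero [Fintype ι] [DecidableEq ι] [IsProbabilityMeasure μ]
    {Z : ι → Ω → ℝ} (hindep : iIndepFun Z μ) (hmeas : ∀ i, Measurable (Z i))
    (hint : ∀ i, Integrable (Z i) μ) {ζ : ι → ℝ} (hζ : ∀ i, ζ i = ∫ ω, Z i ω ∂μ)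
    {S : Finset ι} (hS : 2 ≤ S.card) (k : ι) {g : ℝ → ℝ} (hg : Measurable g) :
    ∫ ω, (∏ j ∈ S, (Z j ω - ζ j)) * g (Z k ω) ∂μ = 0 := by
  obtain ⟨i, hiS, hik⟩ : ∃ i ∈ S, i ≠ k := Finset.exists_mem_ne (by omega) k
  let f : ι → ℝ → ℝ := fun j x => (if j ∈ S then x - ζ j else 1) * (if j = k then g x else 1)
  have hprod : ∀ ω, (∏ j ∈ S, (Z j ω - ζ j)) * g (Z k ω) = ∏ j, f j (Z j ω) := fun ω => by
    simp only [f, Finset.prod_mul_distrib, Finset.prod_ite_mem, Finset.univ_inter,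
      Finset.prod_ite_eq', Finset.mem_univ, if_true]
  have hf : ∀ j, Measurable (f j) := fun j => by
    simp only [f]
    split_ifs <;> fun_prop
  simp_rw [hprod, hindep.integral_fun_prod_comp (fun j => (hmeas j).aemeasurable)
    (fun j => (hf j).aestronglyMeasurable)]
  refine Finset.prod_eq_zero (Finset.mem_univ i) ?_
  simpa [f, hiS, hik] using integral_sub_eq_zero_of_eq_integral (hint i) (hζ i)

lemma integral_mul_sub_eq_of_orthogonal [Fintype ι] {w T D ε : Ω → ℝ} {Z : ι → Ω → ℝ}
    {β₀ : ℝ} {φ : ι → ℝ}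
    (hstruct : ∀ ω, T ω = β₀ * D ω + (∑ k, φ k * Z k ω) + ε ω)
    (hwD : Integrable (fun ω => w ω * D ω) μ) (hwZ : ∀ k, Integrable (fun ω => w ω * Z k ω) μ)
    (hwε : Integrable (fun ω => w ω * ε ω) μ)
    (horthZ : ∀ k, ∫ ω, w ω * Z k ω ∂μ = 0) (horthε : ∫ ω, w ω * ε ω ∂μ = 0) (β : ℝ) :
    ∫ ω, w ω * (T ω - β * D ω) ∂μ = (β₀ - β) * ∫ ω, w ω * D ω ∂μ := by
  have hsplit : ∀ ω, w ω * (T ω - β * D ω)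
      = (β₀ - β) * (w ω * D ω) + (∑ k, φ k * (w ω * Z k ω) + w ω * ε ω) := fun ω => by
    have hsum : ∑ k, φ k * (w ω * Z k ω) = w ω * ∑ k, φ k * Z k ω := by
      rw [Finset.mul_sum]
      exact Finset.sum_congr rfl fun k _ => by ring
    rw [hsum, hstruct]
    ring
  have hwZsum : Integrable (fun ω => ∑ k, φ k * (w ω * Z k ω)) μ :=
    integrable_finsetSum _ fun k _ => (hwZ k).const_mul _
  have hrest : Integrable (fun ω => ∑ k, φ k * (w ω * Z k ω) + w ω * ε ω) μ := hwZsum.add hwε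
  simp_rw [hsplit]
  rw [integral_add (hwD.const_mul _) hrest, integral_add hwZsum hwε,
    integral_const_mul, integral_finsetSum _ fun k _ => (hwZ k).const_mul _]
  simp [integral_const_mul, horthZ, horthε]

end Moments

theorem stacked_interaction_moment_unique_zero_general
    {Ω : Type*} [MeasurableSpace Ω] (μ : Measure Ω) [IsProbabilityMeasure μ]
    {p : ℕ} (Z : Fin p → Ω → ℝ) (T D ε : Ω → ℝ)
    (hmeas : ∀ i, Measurable (Z i))
    (hindep : iIndepFun Z μ)
    (hint : ∀ i, Integrable (Z i) μ)
    (ζ : Fin p → ℝ) (hζ : ∀ i, ζ i = ∫ ω, Z i ω ∂μ)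
    (β₀ : ℝ) (φ : Fin p → ℝ)
    (hstruct : ∀ ω, T ω = β₀ * D ω + (∑ k, φ k * Z k ω) + ε ω)
    (hεint : Integrable ε μ)
    (hcond : μ[ε | MeasurableSpace.comap (fun ω i => Z i ω) inferInstance] =ᵐ[μ] 0)
    (q : ℕ)
    (hDprod : ∀ S : Finset (Fin p),
      Integrable (fun ω => (∏ j ∈ S, (Z j ω - ζ j)) * D ω) μ)
    (hεprod : ∀ S : Finset (Fin p),
      Integrable (fun ω => (∏ j ∈ S, (Z j ω - ζ j)) * ε ω) μ)
    (hZprod : ∀ (S : Finset (Fin p)) (k : Fin p),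
      Integrable (fun ω => (∏ j ∈ S, (Z j ω - ζ j)) * Z k ω) μ)
    (hrelevance : ∃ S : Finset (Fin p), 2 ≤ S.card ∧ S.card ≤ q ∧
      (∫ ω, (∏ j ∈ S, (Z j ω - ζ j)) * D ω ∂μ) ≠ 0) :
    ∀ β : ℝ,
      (∀ S : Finset (Fin p), 2 ≤ S.card → S.card ≤ q →
        ∫ ω, (∏ j ∈ S, (Z j ω - ζ j)) * (T ω - β * D ω) ∂μ = 0) ↔ β = β₀ := by
  intro β
  have hZvec : Measurable fun ω (i : Fin p) => Z i ω := measurable_pi_iff.mpr hmeas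
  have hinteraction : ∀ S : Finset (Fin p), StronglyMeasurable[MeasurableSpace.comap
      (fun ω i => Z i ω) inferInstance] fun ω => ∏ j ∈ S, (Z j ω - ζ j) := fun S =>
    ((by fun_prop : Measurable fun x : Fin p → ℝ => ∏ j ∈ S, (x j - ζ j)).comp
      (comap_measurable _)).stronglyMeasurable
  have hmoment : ∀ S : Finset (Fin p), 2 ≤ S.card →
      ∫ ω, (∏ j ∈ S, (Z j ω - ζ j)) * (T ω - β * D ω) ∂μ
        = (β₀ - β) * ∫ ω, (∏ j ∈ S, (Z j ω - ζ j)) * D ω ∂μ := fun S hS =>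
    integral_mul_sub_eq_of_orthogonal hstruct (hDprod S) (hZprod S) (hεprod S)
      (fun k => integral_interaction_mul_eq_zero hindep hmeas hint hζ hS k measurable_id)
      (integral_mul_eq_zero_of_condExp_eq_zero hZvec.comap_le (hinteraction S) (hεprod S)
        hεint hcond) β
  constructor
  · intro hzero
    obtain ⟨S, hS, hSq, hrel⟩ := hrelevance
    have h := hzero S hS hSq
    rw [hmoment S hS, mul_eq_zero] at h
    linarith [h.resolve_right hrel]
  · rintro rfl S hS _
    rw [hmoment S hS, sub_self, zero_mul]

/-- Uncensored identification (Lemma 1): under the structural model with mutually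
independent instruments, if at least one centered interaction of order between 2 and `q`
is correlated with the exposure `D`, then `β₀` is the unique zero of the stacked
interaction moment map `β ↦ E[I_{2:q}(Z;ζ)(T − βD)]`. -/
theorem stacked_interaction_moment_unique_zero
    {Ω : Type*} [MeasurableSpace Ω] (μ : Measure Ω) [IsProbabilityMeasure μ]
    {p : ℕ} (Z : Fin p → Ω → ℝ) (T D ε : Ω → ℝ)
    (hmeas : ∀ i, Measurable (Z i)) (hTmeas : Measurable T) (hDmeas : Measurable D)
    (hεmeas : Measurable ε)
    (hindep : iIndepFun Z μ)
    (hint : ∀ i, Integrable (Z i) μ)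
    (ζ : Fin p → ℝ) (hζ : ∀ i, ζ i = ∫ ω, Z i ω ∂μ)
    (β₀ : ℝ) (φ : Fin p → ℝ)
    (hstruct : ∀ ω, T ω = β₀ * D ω + (∑ k, φ k * Z k ω) + ε ω)
    (hεint : Integrable ε μ)
    (hcond : μ[ε | MeasurableSpace.comap (fun ω i => Z i ω) inferInstance] =ᵐ[μ] 0)
    (q : ℕ) (hq : q ≤ p)
    (hTprod : ∀ S : Finset (Fin p),
      Integrable (fun ω => (∏ j ∈ S, (Z j ω - ζ j)) * T ω) μ)
    (hDprod : ∀ S : Finset (Fin p),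
      Integrable (fun ω => (∏ j ∈ S, (Z j ω - ζ j)) * D ω) μ)
    (hεprod : ∀ S : Finset (Fin p),
      Integrable (fun ω => (∏ j ∈ S, (Z j ω - ζ j)) * ε ω) μ)
    (hZprod : ∀ (S : Finset (Fin p)) (k : Fin p),
      Integrable (fun ω => (∏ j ∈ S, (Z j ω - ζ j)) * Z k ω) μ)
    (hrelevance : ∃ S : Finset (Fin p), 2 ≤ S.card ∧ S.card ≤ q ∧
      (∫ ω, (∏ j ∈ S, (Z j ω - ζ j)) * D ω ∂μ) ≠ 0) :
    ∀ β : ℝ,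
      (∀ S : Finset (Fin p), 2 ≤ S.card → S.card ≤ q →
        ∫ ω, (∏ j ∈ S, (Z j ω - ζ j)) * (T ω - β * D ω) ∂μ = 0) ↔ β = β₀ :=
  stacked_interaction_moment_unique_zero_general μ Z T D ε hmeas hindep hint ζ hζ β₀ φ hstruct hεint
    hcond q hDprod hεprod hZprod hrelevance
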